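/- Let k ∈ ℕ and let a_0, …, a_k be rational numbers with 0 ≤ a_i ≤ 1/2 for all i ≤ k. If ∑_{i=0}^{k} a_i ≤ 2, then ∏_{i=0}^{k} (1 − a_i) ≥ 1/81. -/

import Mathlib

/-!
Each factor satisfies `1 - a ≥ (1 - a/3)^4` on `[0, 1/2]` (a convex function below a chord), and
the Weierstrass product inequality `∏ (1 - xᵢ) ≥ 1 - ∑ xᵢ` gives
`∏ (1 - aᵢ) ≥ (∏ (1 - aᵢ/3))^4 ≥ (1 - ∑ aᵢ/3)^4 ≥ (1/3)^4`.
-/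

open Finset

theorem Finset.one_sub_sum_le_prod_one_sub {ι R : Type*} [CommRing R] [LinearOrder R]
    [IsStrictOrderedRing R] (s : Finset ι) (x : ι → R) (hx : ∀ i ∈ s, 0 ≤ x i ∧ x i ≤ 1) :
    1 - ∑ i ∈ s, x i ≤ ∏ i ∈ s, (1 - x i) := by
  classical
  induction s using Finset.induction_on with
  | empty => simp
  | insert j s hj ih =>
    rw [sum_insert hj, prod_insert hj]
    obtain ⟨hxj0, hxj1⟩ := hx j (mem_insert_self j s)
    have hx' : ∀ i ∈ s, 0 ≤ x i ∧ x i ≤ 1 := fun i hi ↦ hx i (mem_insert_of_mem hi)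
    have hsum : 0 ≤ ∑ i ∈ s, x i := sum_nonneg fun i hi ↦ (hx' i hi).1
    calc 1 - (x j + ∑ i ∈ s, x i)
        ≤ (1 - x j) * (1 - ∑ i ∈ s, x i) := by linarith [mul_nonneg hxj0 hsum]
      _ ≤ (1 - x j) * ∏ i ∈ s, (1 - x i) :=
        mul_le_mul_of_nonneg_left (ih hx') (sub_nonneg.mpr hxj1)

theorem one_sub_div_three_pow_four_le_one_sub {K : Type*} [Field K] [LinearOrder K]
    [IsStrictOrderedRing K] {a : K} (ha₀ : 0 ≤ a) (ha : a ≤ 1 / 2) :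
    (1 - a / 3) ^ 4 ≤ 1 - a := by
  have hlin : 0 ≤ 1 / 3 - 2 * a / 3 := by linarith
  have hcub : 0 ≤ a ^ 2 * (4 / 27 - a / 81) := by
    apply mul_nonneg (sq_nonneg a); linarith
  have hexpand :
      1 - a - (1 - a / 3) ^ 4 = a * ((1 / 3 - 2 * a / 3) + a ^ 2 * (4 / 27 - a / 81)) := by
    ring
  linarith [mul_nonneg ha₀ (add_nonneg hlin hcub)]

/-- If `0 ≤ aᵢ ≤ 1/2` for `i ≤ k` and `∑_{i≤k} aᵢ ≤ 2`, then `∏_{i≤k} (1 - aᵢ) ≥ 1/81`. -/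
theorem prod_one_sub_ge_of_sum_le (k : ℕ) (a : ℕ → ℚ)
    (h : ∀ i ≤ k, 0 ≤ a i ∧ a i ≤ 1 / 2)
    (hs : ∑ i ∈ Finset.range (k + 1), a i ≤ 2) :
    (1 : ℚ) / 81 ≤ ∏ i ∈ Finset.range (k + 1), (1 - a i) := by
  have ha : ∀ i ∈ range (k + 1), 0 ≤ a i ∧ a i ≤ 1 / 2 :=
    fun i hi ↦ h i (mem_range_succ_iff.mp hi)
  have hthird : ∀ i ∈ range (k + 1), 0 ≤ a i / 3 ∧ a i / 3 ≤ 1 :=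
    fun i hi ↦ ⟨by linarith [(ha i hi).1], by linarith [(ha i hi).2]⟩
  calc (1 : ℚ) / 81 = (1 - 2 / 3) ^ 4 := by norm_num
    _ ≤ (1 - ∑ i ∈ range (k + 1), a i / 3) ^ 4 := by
        rw [← sum_div]; gcongr
    _ ≤ (∏ i ∈ range (k + 1), (1 - a i / 3)) ^ 4 := by
        gcongr
        · rw [← sum_div]; linarith
        · exact one_sub_sum_le_prod_one_sub _ _ hthird
    _ = ∏ i ∈ range (k + 1), (1 - a i / 3) ^ 4 := (prod_pow _ _ _).symm
    _ ≤ ∏ i ∈ range (k + 1), (1 - a i) :=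
        prod_le_prod (fun _ _ ↦ by positivity)
          fun i hi ↦ one_sub_div_three_pow_four_le_one_sub (ha i hi).1 (ha i hi).2
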